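/- For every real number q with 0 < q < 1, one has log(q) · log(1 − q) ≤ (log 2)², with equality if and only if q = 1/2. (Here log is the natural logarithm.) -/

import Mathlib

/-! For `h q = log q * log (1 - q)` one has `q (1 - q) h' q = (1 - q) log (1 - q) - q log q`,
which is positive on `(0, 1/2)` by Bernoulli's inequality. Hence `h` increases strictly on
`(0, 1/2]`, and the symmetry `h q = h (1 - q)` covers `[1/2, 1)`. -/

open Real Set

lemma mul_log_lt_one_sub_mul_log_one_sub {a : ℝ} (ha : 0 < a) (ha' : a < 1 / 2) :
    a * log a < (1 - a) * log (1 - a) := by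
  have hb : 0 < 1 - a := by linarith
  -- Bernoulli's inequality with exponent `(1 - a) / a > 1` gives `a < (1 - a) ^ ((1 - a) / a)`.
  have hbern := one_add_mul_self_lt_rpow_one_add (s := -a) (by linarith) (by linarith)
    (p := (1 - a) / a) (by rw [lt_div_iff₀ ha]; linarith)
  rw [show 1 + (1 - a) / a * -a = a by field_simp; ring, ← sub_eq_add_neg] at hbern
  have hlog := log_lt_log ha hbern
  rw [log_rpow hb] at hlog
  calc a * log a < a * ((1 - a) / a * log (1 - a)) := mul_lt_mul_of_pos_left hlog ha
    _ = (1 - a) * log (1 - a) := by field_simp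

lemma hasDerivAt_log_mul_log_one_sub {x : ℝ} (hx : 0 < x) (hx' : x < 1) :
    HasDerivAt (fun y => log y * log (1 - y)) (log (1 - x) / x - log x / (1 - x)) x := by
  have hlog := hasDerivAt_log hx.ne'
  have hlog_one_sub := ((hasDerivAt_id x).const_sub 1).log (sub_ne_zero.2 hx'.ne')
  refine (hlog.mul hlog_one_sub).congr_deriv ?_
  simp only [id]
  ring

lemma strictMonoOn_log_mul_log_one_sub :
    StrictMonoOn (fun y => log y * log (1 - y)) (Ioc 0 (1 / 2)) := by
  apply strictMonoOn_of_deriv_pos (convex_Ioc 0 (1 / 2))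
  · intro x hx
    have hx' : x < 1 := by linarith [hx.2]
    exact (hasDerivAt_log_mul_log_one_sub hx.1 hx').continuousAt.continuousWithinAt
  · intro x hx
    rw [interior_Ioc] at hx
    obtain ⟨hx0, hx2⟩ := hx
    rw [(hasDerivAt_log_mul_log_one_sub hx0 (by linarith)).deriv, sub_pos,
      div_lt_div_iff₀ (by linarith) hx0]
    linarith [mul_log_lt_one_sub_mul_log_one_sub hx0 hx2]

lemma log_half_mul_log_one_sub_half : log (1 / 2) * log (1 - 1 / 2) = log 2 ^ 2 := by
  rw [show (1 : ℝ) - 1 / 2 = 1 / 2 by norm_num, one_div, log_inv]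
  ring

lemma log_mul_log_one_sub_lt_of_lt_half {q : ℝ} (hq : 0 < q) (hq' : q < 1 / 2) :
    log q * log (1 - q) < log 2 ^ 2 :=
  log_half_mul_log_one_sub_half ▸
    strictMonoOn_log_mul_log_one_sub ⟨hq, hq'.le⟩ ⟨by norm_num, le_rfl⟩ hq'

/-- For every `q ∈ (0,1)`, `log q · log (1-q) ≤ (log 2)²`, with equality iff `q = 1/2`
(natural logarithm). -/
theorem log_mul_log_one_sub_le (q : ℝ) (h0 : 0 < q) (h1 : q < 1) :
    Real.log q * Real.log (1 - q) ≤ (Real.log 2) ^ 2 ∧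
      (Real.log q * Real.log (1 - q) = (Real.log 2) ^ 2 ↔ q = 1 / 2) := by
  rcases lt_trichotomy q (1 / 2) with hlt | rfl | hgt
  · have hstrict := log_mul_log_one_sub_lt_of_lt_half h0 hlt
    exact ⟨hstrict.le, iff_of_false hstrict.ne hlt.ne⟩
  · exact ⟨log_half_mul_log_one_sub_half.le, iff_of_true log_half_mul_log_one_sub_half rfl⟩
  · have hstrict := log_mul_log_one_sub_lt_of_lt_half (q := 1 - q) (by linarith) (by linarith)
    rw [sub_sub_cancel, mul_comm] at hstrict
    exact ⟨hstrict.le, iff_of_false hstrict.ne hgt.ne'⟩
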